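/- Let Λ be a consistent normal modal logic of Type C (i.e., F_• ⊨ Λ, Λ ⊬ □^n⊥ for all n ≥ 1, and Λ ⊢ ◇^{≤n}□⊥ for some n ≥ 1), let M ⊆ {◇,□}, and let C be any Boolean clone. Then C ⊆ Clos^Λ_M(C), and Clos^Λ_M(C) is contained in: C if M = ∅; the clone generated by C ∪ {⊥} if M = {◇}; the clone generated by C ∪ {⊤} if M = {□}; and the clone generated by C ∪ {⊤,⊥} if M = {◇,□}. -/

import Mathlib

set_option maxHeartbeats 1000000

/-! ### Modal formulas -/

inductive MF : Type
  | var : ℕ → MF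
  | neg : MF → MF
  | and : MF → MF → MF
  | or : MF → MF → MF
  | dia : MF → MF
  | box : MF → MF

namespace MF

/-- Implication `φ → ψ`, as the abbreviation `¬φ ∨ ψ`. -/
def imp (φ ψ : MF) : MF := .or (.neg φ) ψ

/-- Bi-implication `φ ↔ ψ`. -/
def iff (φ ψ : MF) : MF := .and (φ.imp ψ) (ψ.imp φ)

/-- `⊥` abbreviates `p ∧ ¬p`. -/
def bot : MF := .and (.var 0) (.neg (.var 0))

/-- `⊤` abbreviates `p ∨ ¬p`. -/
def top : MF := .or (.var 0) (.neg (.var 0))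

/-- A formula is purely propositional if it contains no modal operators. -/
def isProp : MF → Prop
  | .var _ => True
  | .neg φ => φ.isProp
  | .and φ ψ => φ.isProp ∧ ψ.isProp
  | .or φ ψ => φ.isProp ∧ ψ.isProp
  | .dia _ => False
  | .box _ => False

/-- Boolean evaluation (meaningful for purely propositional formulas). -/
def propEval (v : ℕ → Bool) : MF → Bool
  | .var n => v n
  | .neg φ => !(propEval v φ)
  | .and φ ψ => propEval v φ && propEval v ψ
  | .or φ ψ => propEval v φ || propEval v ψ
  | .dia φ => propEval v φ
  | .box φ => propEval v φ

/-- Propositional tautologies. -/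
def isTautology (φ : MF) : Prop := φ.isProp ∧ ∀ v, φ.propEval v = true

/-- Uniform substitution. -/
def subst (σ : ℕ → MF) : MF → MF
  | .var n => σ n
  | .neg φ => .neg (φ.subst σ)
  | .and φ ψ => .and (φ.subst σ) (ψ.subst σ)
  | .or φ ψ => .or (φ.subst σ) (ψ.subst σ)
  | .dia φ => .dia (φ.subst σ)
  | .box φ => .box (φ.subst σ)

/-- The set of propositional variables occurring in a formula. -/
def vars : MF → Set ℕ
  | .var n => {n}
  | .neg φ => φ.vars
  | .and φ ψ => φ.vars ∪ ψ.vars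
  | .or φ ψ => φ.vars ∪ ψ.vars
  | .dia φ => φ.vars
  | .box φ => φ.vars

/-- Kripke satisfaction. -/
def sat {W : Type} (R : W → W → Prop) (V : ℕ → W → Prop) : MF → W → Prop
  | .var n, w => V n w
  | .neg φ, w => ¬ sat R V φ w
  | .and φ ψ, w => sat R V φ w ∧ sat R V ψ w
  | .or φ ψ, w => sat R V φ w ∨ sat R V ψ w
  | .dia φ, w => ∃ u, R w u ∧ sat R V φ u
  | .box φ, w => ∀ u, R w u → sat R V φ u

/-- `◇^n φ`. -/
def diaIter : ℕ → MF → MF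
  | 0, φ => φ
  | n + 1, φ => .dia (diaIter n φ)

/-- `□^n φ`. -/
def boxIter : ℕ → MF → MF
  | 0, φ => φ
  | n + 1, φ => .box (boxIter n φ)

/-- `◇^{≤n} φ`, the disjunction of `◇^k φ` for `0 ≤ k ≤ n`. -/
def diaLe : ℕ → MF → MF
  | 0, φ => φ
  | n + 1, φ => .or (diaLe n φ) (diaIter (n + 1) φ)

/-- An injective numeric encoding of modal formulas. -/
def encodeMF : MF → ℕ
  | .var n => Nat.pair 0 n
  | .neg φ => Nat.pair 1 φ.encodeMF
  | .and φ ψ => Nat.pair 2 (Nat.pair φ.encodeMF ψ.encodeMF)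
  | .or φ ψ => Nat.pair 3 (Nat.pair φ.encodeMF ψ.encodeMF)
  | .dia φ => Nat.pair 4 φ.encodeMF
  | .box φ => Nat.pair 5 φ.encodeMF

end MF

/-- A normal modal logic. -/
structure NormalLogic (Λ : Set MF) : Prop where
  taut : ∀ φ, φ.isTautology → φ ∈ Λ
  axK : ∀ φ ψ, ((MF.box (φ.imp ψ)).imp ((MF.box φ).imp (MF.box ψ))) ∈ Λ
  dual : ∀ φ, ((MF.dia φ).iff (MF.neg (MF.box (MF.neg φ)))) ∈ Λ
  mp : ∀ φ ψ, φ.imp ψ ∈ Λ → φ ∈ Λ → ψ ∈ Λ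
  usubst : ∀ φ (σ : ℕ → MF), φ ∈ Λ → φ.subst σ ∈ Λ
  nec : ∀ φ, φ ∈ Λ → MF.box φ ∈ Λ

/-- Validity on the frame `F_⊙` consisting of a single reflexive world. -/
def validOnReflPoint (φ : MF) : Prop :=
  ∀ V : ℕ → Prop, MF.sat (W := Unit) (fun _ _ => True) (fun n _ => V n) φ ()

/-- Validity on the frame `F_•` consisting of a single irreflexive world. -/
def validOnIrreflPoint (φ : MF) : Prop :=
  ∀ V : ℕ → Prop, MF.sat (W := Unit) (fun _ _ => False) (fun n _ => V n) φ ()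

/-- Type A: `F_⊙ ⊨ Λ`. -/
def TypeA (Λ : Set MF) : Prop := ∀ φ ∈ Λ, validOnReflPoint φ

/-- Type B: `F_• ⊨ Λ` and `Λ ⊢ □^n ⊥` for some `n ≥ 1`. -/
def TypeB (Λ : Set MF) : Prop :=
  (∀ φ ∈ Λ, validOnIrreflPoint φ) ∧ ∃ n ≥ 1, MF.boxIter n MF.bot ∈ Λ

/-- Type C: `F_• ⊨ Λ`, `Λ ⊬ □^n ⊥` for all `n ≥ 1`, `Λ ⊢ ◇^{≤n} □⊥` for some `n ≥ 1`. -/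
def TypeC (Λ : Set MF) : Prop :=
  (∀ φ ∈ Λ, validOnIrreflPoint φ) ∧ (∀ n ≥ 1, MF.boxIter n MF.bot ∉ Λ) ∧
    ∃ n ≥ 1, MF.diaLe n (MF.box MF.bot) ∈ Λ

/-- The (expansions of the) fragment `ML_Φ`: the smallest set of modal formulas containing
all propositional variables and closed under applying the connectives given by the formulas in
`Φ` (i.e., substituting fragment formulas into a member of `Φ`). -/
inductive MLFrag (Φ : Set MF) : MF → Prop
  | var (n : ℕ) : MLFrag Φ (MF.var n)
  | app (φ : MF) (hφ : φ ∈ Φ) (σ : ℕ → MF) (hσ : ∀ n, MLFrag Φ (σ n)) :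
      MLFrag Φ (φ.subst σ)

/-- Expressive containment `ML_Φ ≼^Λ ML_Ψ`. -/
def exprLe (Λ : Set MF) (Φ Ψ : Set MF) : Prop :=
  ∀ φ, MLFrag Φ φ → ∃ ψ, MLFrag Ψ ψ ∧ (φ.iff ψ) ∈ Λ

/-- Expressive equivalence with respect to `Λ`. -/
def exprEq (Λ : Set MF) (Φ Ψ : Set MF) : Prop := exprLe Λ Φ Ψ ∧ exprLe Λ Ψ Φ

/-- The minimal normal modal logic `K`: (semantically) the set of formulas valid in all
Kripke models. -/
def KLogic : Set MF :=
  {φ | ∀ (W : Type) (R : W → W → Prop) (V : ℕ → W → Prop) (w : W), MF.sat R V φ w}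

/-! ### Boolean functions and clones -/

/-- A Boolean function of positive arity. -/
structure BFun : Type where
  arity : ℕ
  arity_pos : 0 < arity
  eval : (Fin arity → Bool) → Bool

/-- A Boolean clone: a set of Boolean functions containing all projections and
closed under composition. -/
def IsClone (C : Set BFun) : Prop :=
  (∀ (n : ℕ) (hn : 0 < n) (k : Fin n), (⟨n, hn, fun v => v k⟩ : BFun) ∈ C) ∧
  (∀ f ∈ C, ∀ (m : ℕ) (hm : 0 < m) (g : Fin (BFun.arity f) → (Fin m → Bool) → Bool),
    (∀ i, (⟨m, hm, g i⟩ : BFun) ∈ C) →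
    (⟨m, hm, fun v => f.eval (fun i => g i v)⟩ : BFun) ∈ C)

/-- The clone generated by a set of Boolean functions. -/
def cloneGen (O : Set BFun) : Set BFun := ⋂₀ {C : Set BFun | IsClone C ∧ O ⊆ C}

/-- `O ≼ O'`: the clone generated by `O` is contained in the clone generated by `O'`. -/
def cloneLe (O O' : Set BFun) : Prop := cloneGen O ⊆ cloneGen O'

/-- The constant-true unary Boolean function. -/
def bfTop : BFun := ⟨1, Nat.one_pos, fun _ => true⟩
/-- The constant-false unary Boolean function. -/
def bfBot : BFun := ⟨1, Nat.one_pos, fun _ => false⟩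
/-- Negation. -/
def bfNot : BFun := ⟨1, Nat.one_pos, fun v => !(v 0)⟩
/-- Binary conjunction. -/
def bfAnd : BFun := ⟨2, Nat.succ_pos 1, fun v => v 0 && v 1⟩
/-- Binary disjunction. -/
def bfOr : BFun := ⟨2, Nat.succ_pos 1, fun v => v 0 || v 1⟩
/-- Ternary exclusive or `x ⊕ y ⊕ z`. -/
def bf3Xor : BFun := ⟨3, Nat.succ_pos 2, fun v => (v 0).xor ((v 1).xor (v 2))⟩
/-- `oxor(x,y,z) = x ∨ (y ⊕ z)`. -/
def bfOxor : BFun := ⟨3, Nat.succ_pos 2, fun v => v 0 || ((v 1).xor (v 2))⟩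
/-- `aimp(x,y,z) = x ∧ (y → z)`. -/
def bfAimp : BFun := ⟨3, Nat.succ_pos 2, fun v => v 0 && (!(v 1) || v 2)⟩

/-- The (purely propositional) formula `φ` defines the Boolean function `f`. -/
def definesBF (φ : MF) (f : BFun) : Prop :=
  φ.isProp ∧ ∀ v : ℕ → Bool, φ.propEval v = f.eval (fun i => v i.val)

/-- The generating set of formulas of the simple fragment `ML_{M ∪ O}`, where
`M ⊆ {◇,□}` is specified by the two Booleans `hd` (for `◇`) and `hb` (for `□`). -/
def MOgen (hd hb : Bool) (O : Set BFun) : Set MF :=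
  {φ | (hd = true ∧ φ = MF.dia (MF.var 0)) ∨ (hb = true ∧ φ = MF.box (MF.var 0)) ∨
    ∃ f ∈ O, definesBF φ f}

/-- `Clos^Λ_M(O)`: the set of Boolean functions `f` such that some propositional formula
defining `f` is `Λ`-equivalent to some `ML_{M ∪ O}`-formula. -/
def Clos (Λ : Set MF) (hd hb : Bool) (O : Set BFun) : Set BFun :=
  {f | ∃ φ ψ : MF, definesBF φ f ∧ MLFrag (MOgen hd hb O) ψ ∧ (φ.iff ψ) ∈ Λ}

/-- `β(Φ)`: the set of Boolean functions defined by propositional formulas in `Φ`. -/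
def betaBF (Φ : Set MF) : Set BFun := {f | ∃ φ ∈ Φ, definesBF φ f}

/-- A set of modal formulas is simple if each member is `◇x`, `□x`, or purely
propositional. -/
def IsSimpleSet (Φ : Set MF) : Prop :=
  ∀ φ ∈ Φ, (∃ n, φ = MF.dia (MF.var n)) ∨ (∃ n, φ = MF.box (MF.var n)) ∨ φ.isProp

/-- `Φ` is `M`-simple (with `M` given by `hd`, `hb`): simple, and the modal operators
among its members are exactly those in `M`. -/
def IsMSimpleSet (hd hb : Bool) (Φ : Set MF) : Prop :=
  IsSimpleSet Φ ∧ ((∃ n, MF.dia (MF.var n) ∈ Φ) ↔ hd = true) ∧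
    ((∃ n, MF.box (MF.var n) ∈ Φ) ↔ hb = true)

/-! ### Propositional fragments `PL_O` -/

/-- Formulas of the propositional fragment `PL_O`. -/
inductive PLF (O : Set BFun) : Type
  | var : ℕ → PLF O
  | app : (f : BFun) → f ∈ O → (Fin f.arity → PLF O) → PLF O

namespace PLF

variable {O : Set BFun}

/-- Evaluation of a `PL_O`-formula under a truth assignment. -/
def eval (v : ℕ → Bool) : PLF O → Bool
  | .var n => v n
  | .app f _ args => f.eval (fun i => (args i).eval v)

/-- The variables occurring in a `PL_O`-formula. -/
def pvars : PLF O → Set ℕ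
  | .var n => {n}
  | .app _ _ args => ⋃ i, (args i).pvars

/-- The set of subformulas of a `PL_O`-formula. -/
def subf : PLF O → Set (PLF O)
  | .var n => {PLF.var n}
  | .app f h args => insert (PLF.app f h args) (⋃ i, (args i).subf)

/-- `|φ|_dag`: the number of distinct subformulas. -/
noncomputable def dagSize (φ : PLF O) : ℕ := φ.subf.ncard

/-- Equivalence of propositional formulas. -/
def equivPLF (φ ψ : PLF O) : Prop := ∀ v, φ.eval v = ψ.eval v

/-- `φ` fits the labeled example `(V, lab)`. -/
def fits (φ : PLF O) (e : (ℕ → Bool) × Bool) : Prop := φ.eval e.1 = e.2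

end PLF

/-- `E` uniquely characterizes `φ` with respect to the class `L` of formulas. -/
def uniqCharPL {O : Set BFun} (φ : PLF O) (L : Set (PLF O))
    (E : Set ((ℕ → Bool) × Bool)) : Prop :=
  (∀ e ∈ E, φ.fits e) ∧ ∀ ψ ∈ L, (∀ e ∈ E, ψ.fits e) → φ.equivPLF ψ

/-! ### Concept classes and PC-reductions -/

/-- A concept `c` fits the labeled example `(e, lab)`. -/
def ccFits {C : Type*} {E : Type*} (l : C → Set E) (c : C) (e : E × Bool) : Prop :=
  e.1 ∈ l c ↔ e.2 = true

/-- `S` uniquely characterizes the concept `c` within the concept class given by `l`. -/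
def ccUniqChar {C : Type*} {E : Type*} (l : C → Set E) (c : C) (S : Set (E × Bool)) : Prop :=
  (∀ e ∈ S, ccFits l c e) ∧ ∀ c', (∀ e ∈ S, ccFits l c' e) → l c' = l c

/-- A PC-reduction between concept classes. -/
structure PCRed {C1 : Type*} {E1 : Type*} {C2 : Type*} {E2 : Type*}
    (l1 : C1 → Set E1) (l2 : C2 → Set E2) where
  fc : C1 → C2
  he : E1 → E2
  cond1 : ∀ c e, e ∈ l1 c ↔ he e ∈ l2 (fc c)
  cond2 : ∀ e : E2, (∀ c, e ∈ l2 (fc c)) ∨ (∀ c, e ∉ l2 (fc c)) ∨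
    ∃ e' : E1, {c | e ∈ l2 (fc c)} = {c | e' ∈ l1 c}

/-- Extend an assignment on `PROP` to all variables (by `false` elsewhere). -/
def extAssign (PROP : Finset ℕ) (v : {x // x ∈ PROP} → Bool) : ℕ → Bool :=
  fun n => if h : n ∈ PROP then v ⟨n, h⟩ else false

/-- The concept class `PL_O[PROP]`: concepts are `PL_O`-formulas with variables in `PROP`,
examples are truth assignments on `PROP`. -/
def plSem (O : Set BFun) (PROP : Finset ℕ) :
    {φ : PLF O // φ.pvars ⊆ ↑PROP} → Set ({x // x ∈ PROP} → Bool) :=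
  fun φ => {v | φ.1.eval (extAssign PROP v) = true}

/-! ### Simple modal fragments as syntax, and finite pointed Kripke models -/

/-- Formulas of the simple modal fragment `ML_{M ∪ O}` (as a syntax): Boolean connectives
from `O`, plus `◇` if `hd` and `□` if `hb`. -/
inductive MLF (O : Set BFun) (hd hb : Bool) : Type
  | var : ℕ → MLF O hd hb
  | app : (f : BFun) → f ∈ O → (Fin f.arity → MLF O hd hb) → MLF O hd hb
  | dia : hd = true → MLF O hd hb → MLF O hd hb
  | box : hb = true → MLF O hd hb → MLF O hd hb

/-- Propositional application of a Boolean function to propositions. -/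
def BFun.evalP (f : BFun) (P : Fin f.arity → Prop) : Prop :=
  f.eval (fun i => @decide (P i) (Classical.propDecidable _)) = true

namespace MLF

variable {O : Set BFun} {hd hb : Bool}

/-- Kripke satisfaction for simple-fragment formulas. -/
def msat {W : Type} (R : W → W → Prop) (V : ℕ → W → Prop) :
    MLF O hd hb → W → Prop
  | .var n, w => V n w
  | .app f _ args, w => f.evalP (fun i => msat R V (args i) w)
  | .dia _ φ, w => ∃ u, R w u ∧ msat R V φ u
  | .box _ φ, w => ∀ u, R w u → msat R V φ u

/-- Variables of a simple-fragment formula. -/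
def mvars : MLF O hd hb → Set ℕ
  | .var n => {n}
  | .app _ _ args => ⋃ i, (args i).mvars
  | .dia _ φ => φ.mvars
  | .box _ φ => φ.mvars

end MLF

/-- A finite pointed Kripke model. -/
structure FPModel : Type 1 where
  W : Type
  fin : Finite W
  R : W → W → Prop
  V : ℕ → W → Prop
  pt : W

/-- The concept class `ML_{O,∘}[{p}]` (with `p` the variable `0`): concepts are
simple-fragment formulas over the single variable `p`, examples are finite pointed
Kripke models. -/
def mlSem (O : Set BFun) (hd hb : Bool) :
    {φ : MLF O hd hb // φ.mvars ⊆ {0}} → Set FPModel :=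
  fun φ => {M | MLF.msat M.R M.V φ.1 M.pt}

/-- Satisfaction of a modal formula in a finite pointed Kripke model. -/
def msatMF (M : FPModel) (φ : MF) : Prop := MF.sat M.R M.V φ M.pt

/-- A modal formula fits a labeled example (a finite pointed model with a label). -/
def fitsMF (φ : MF) (e : FPModel × Bool) : Prop := msatMF e.1 φ ↔ e.2 = true

/-- `K`-equivalence of modal formulas: truth at the same worlds of all Kripke models. -/
def KequivMF (φ ψ : MF) : Prop :=
  ∀ (W : Type) (R : W → W → Prop) (V : ℕ → W → Prop) (w : W),
    MF.sat R V φ w ↔ MF.sat R V ψ w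

/-- `E` uniquely characterizes `φ` relative to the fragment `L` (with respect to `K`). -/
def uniqCharMF (φ : MF) (L : Set MF) (E : Set (FPModel × Bool)) : Prop :=
  (∀ e ∈ E, fitsMF φ e) ∧ ∀ ψ ∈ L, (∀ e ∈ E, fitsMF ψ e) → KequivMF φ ψ

/-- `ML_Φ[P]`: the fragment generated by `Φ`, restricted to variables in `P`. -/
def fragSimple (Φ : Set MF) (P : Set ℕ) : Set MF :=
  {φ | MLFrag Φ φ ∧ φ.vars ⊆ P}

/-- `ML_{M∪O}[P]`. -/
def fragMO (hd hb : Bool) (O : Set BFun) (P : Set ℕ) : Set MF :=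
  fragSimple (MOgen hd hb O) P

/-- For a simple set `Φ`: the modal operators of `Φ` are among those specified by
`hd`, `hb`, and `β(Φ)` is contained in the clone generated by `O`. -/
def simpleLeOps (Φ : Set MF) (O : Set BFun) (hd hb : Bool) : Prop :=
  ((∃ n, MF.dia (MF.var n) ∈ Φ) → hd = true) ∧
  ((∃ n, MF.box (MF.var n) ∈ Φ) → hb = true) ∧
  cloneGen (betaBF Φ) ⊆ cloneGen O

/-- Decoding of a natural number as a labeled example (a finite pointed Kripke model with
a Boolean label). -/
def decodeEx (c : ℕ) : FPModel × Bool :=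
  match Denumerable.ofNat (ℕ × List (ℕ × ℕ) × List (ℕ × ℕ) × ℕ × ℕ) c with
  | (n, edges, val, pt, b) =>
    (⟨Fin (n + 1), inferInstance,
      fun u v => (u.val, v.val) ∈ edges,
      fun k w => (k, w.val) ∈ val,
      ⟨pt % (n + 1), Nat.mod_lt pt (Nat.succ_pos n)⟩⟩, b % 2 == 1)


/-!
Since `F_• ⊨ Λ`, two `Λ`-equivalent formulas have the same truth value at the single
irreflexive world under every valuation. There `◇φ` is false and `□φ` is true, so every
`ML_{M ∪ C}`-formula, read at that world, computes a composition of functions of `C` and of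
the constant `⊥` (if `◇ ∈ M`) or `⊤` (if `□ ∈ M`). Conversely each `f ∈ C` is trivially
expressible: it is defined by its truth-table formula, which is itself a connective of the
fragment.
-/

namespace MF

def evalIrrefl (v : ℕ → Bool) : MF → Bool
  | .var n => v n
  | .neg φ => !(evalIrrefl v φ)
  | .and φ ψ => evalIrrefl v φ && evalIrrefl v ψ
  | .or φ ψ => evalIrrefl v φ || evalIrrefl v ψ
  | .dia _ => false
  | .box _ => true

lemma evalIrrefl_of_isProp {φ : MF} (h : φ.isProp) (v : ℕ → Bool) :
    φ.evalIrrefl v = φ.propEval v := by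
  induction φ <;> simp_all [evalIrrefl, propEval, isProp]

lemma evalIrrefl_subst (σ : ℕ → MF) (v : ℕ → Bool) (φ : MF) :
    (φ.subst σ).evalIrrefl v = φ.evalIrrefl (fun n => (σ n).evalIrrefl v) := by
  induction φ <;> simp_all [evalIrrefl, subst]

lemma sat_irreflPoint_iff (v : ℕ → Bool) (φ : MF) :
    sat (W := Unit) (fun _ _ => False) (fun n _ => v n = true) φ () ↔
      φ.evalIrrefl v = true := by
  induction φ <;> simp_all [sat, evalIrrefl]

lemma subst_var (φ : MF) : φ.subst var = φ := by
  induction φ <;> simp_all [subst]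

lemma isTautology_iff_self {φ : MF} (h : φ.isProp) : (φ.iff φ).isTautology :=
  ⟨⟨⟨h, h⟩, h, h⟩, fun v => by
    simp only [iff, imp, propEval]
    cases φ.propEval v <;> rfl⟩

end MF

lemma evalIrrefl_eq_of_iff_mem {Λ : Set MF} (hΛ : ∀ φ ∈ Λ, validOnIrreflPoint φ) {φ ψ : MF}
    (h : φ.iff ψ ∈ Λ) (v : ℕ → Bool) : φ.evalIrrefl v = ψ.evalIrrefl v := by
  have hsat := (MF.sat_irreflPoint_iff v _).1 (hΛ _ h _)
  simp only [MF.iff, MF.imp, MF.evalIrrefl] at hsat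
  cases hφ : φ.evalIrrefl v <;> cases hψ : ψ.evalIrrefl v <;> simp_all

lemma mem_cloneGen_iff {O : Set BFun} {f : BFun} :
    f ∈ cloneGen O ↔ ∀ D, IsClone D → O ⊆ D → f ∈ D := by
  simp only [cloneGen, Set.mem_sInter, Set.mem_ofPred_eq, and_imp]

lemma subset_cloneGen (O : Set BFun) : O ⊆ cloneGen O :=
  fun _ hf => mem_cloneGen_iff.2 fun _ _ hO => hO hf

lemma isClone_cloneGen (O : Set BFun) : IsClone (cloneGen O) :=
  ⟨fun n hn k => mem_cloneGen_iff.2 fun _ hD _ => hD.1 n hn k,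
    fun f hf m hm g hg => mem_cloneGen_iff.2 fun D hD hO =>
      hD.2 f (mem_cloneGen_iff.1 hf D hD hO) m hm g fun i => mem_cloneGen_iff.1 (hg i) D hD hO⟩

lemma IsClone.const_mem {D : Set BFun} (hD : IsClone D) {b : Bool}
    (hb : (⟨1, Nat.one_pos, fun _ => b⟩ : BFun) ∈ D) (m : ℕ) (hm : 0 < m) :
    (⟨m, hm, fun _ => b⟩ : BFun) ∈ D :=
  hD.2 _ hb m hm (fun _ v => v ⟨0, hm⟩) fun _ => hD.1 m hm ⟨0, hm⟩

section Fragment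

variable {D C : Set BFun} {hd hb : Bool}

lemma MLFrag.evalIrrefl_mem (hD : IsClone D) (hCD : C ⊆ D) (hdia : hd = true → bfBot ∈ D)
    (hbox : hb = true → bfTop ∈ D) {ψ : MF} (hψ : MLFrag (MOgen hd hb C) ψ) (m : ℕ)
    (hm : 0 < m) (e : ℕ → (Fin m → Bool) → Bool) (he : ∀ k, (⟨m, hm, e k⟩ : BFun) ∈ D) :
    (⟨m, hm, fun u => ψ.evalIrrefl (fun k => e k u)⟩ : BFun) ∈ D := by
  induction hψ with
  | var n => exact he n
  | app φ hφ σ _ ih =>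
    rcases hφ with ⟨hdt, rfl⟩ | ⟨hbt, rfl⟩ | ⟨g, hg, hφg⟩
    · exact hD.const_mem (hdia hdt) m hm
    · exact hD.const_mem (hbox hbt) m hm
    · have hcomp : ∀ u, (φ.subst σ).evalIrrefl (fun k => e k u) =
          g.eval fun i => (σ i).evalIrrefl (fun k => e k u) := fun u => by
        rw [MF.evalIrrefl_subst, MF.evalIrrefl_of_isProp hφg.1, hφg.2]
      simp only [hcomp]
      exact hD.2 g (hCD hg) m hm _ fun i => ih i

def projEnv (m : ℕ) (hm : 0 < m) (k : ℕ) (u : Fin m → Bool) : Bool :=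
  u (if h : k < m then ⟨k, h⟩ else ⟨0, hm⟩)

lemma clos_subset {Λ : Set MF} (hΛ : ∀ φ ∈ Λ, validOnIrreflPoint φ) (hD : IsClone D)
    (hCD : C ⊆ D) (hdia : hd = true → bfBot ∈ D) (hbox : hb = true → bfTop ∈ D) :
    Clos Λ hd hb C ⊆ D := by
  rintro ⟨m, hm, f⟩ ⟨φ, ψ, hφf, hψ, hφψ⟩
  have hf : f = fun u => ψ.evalIrrefl (fun k => projEnv m hm k u) := by
    funext u
    have hproj : (fun i : Fin m => projEnv m hm i u) = u := funext fun i => by simp [projEnv]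
    calc f u = f (fun i => projEnv m hm i u) := by rw [hproj]
      _ = φ.propEval (fun k => projEnv m hm k u) := (hφf.2 (fun k => projEnv m hm k u)).symm
      _ = φ.evalIrrefl (fun k => projEnv m hm k u) := (MF.evalIrrefl_of_isProp hφf.1 _).symm
      _ = ψ.evalIrrefl (fun k => projEnv m hm k u) := evalIrrefl_eq_of_iff_mem hΛ hφψ _
  subst hf
  exact hψ.evalIrrefl_mem hD hCD hdia hbox m hm _ fun k => hD.1 m hm _

end Fragment

def truthTableFormula : (n : ℕ) → ((Fin n → Bool) → Bool) → MF
  | 0, g => if g Fin.elim0 then MF.top else MF.bot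
  | n + 1, g => .or (.and (.var n) (truthTableFormula n fun u => g (Fin.snoc u true)))
      (.and (.neg (.var n)) (truthTableFormula n fun u => g (Fin.snoc u false)))

lemma isProp_truthTableFormula (n : ℕ) (g : (Fin n → Bool) → Bool) :
    (truthTableFormula n g).isProp := by
  induction n with
  | zero => unfold truthTableFormula; split <;> exact ⟨trivial, trivial⟩
  | succ n ih => exact ⟨⟨trivial, ih _⟩, trivial, ih _⟩

lemma propEval_truthTableFormula (n : ℕ) (g : (Fin n → Bool) → Bool) (v : ℕ → Bool) :
    (truthTableFormula n g).propEval v = g fun i => v i := by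
  induction n with
  | zero =>
    rw [Subsingleton.elim (fun i : Fin 0 => v i) Fin.elim0]
    unfold truthTableFormula
    split <;> simp_all [MF.top, MF.bot, MF.propEval]
  | succ n ih =>
    have hsnoc : (fun i : Fin (n + 1) => v i) = Fin.snoc (fun i : Fin n => v i) (v n) := by
      funext i
      refine Fin.lastCases ?_ (fun j => ?_) i <;> simp
    rw [hsnoc]
    simp only [truthTableFormula, MF.propEval, ih]
    cases v n <;> simp

lemma definesBF_truthTableFormula (f : BFun) : definesBF (truthTableFormula f.arity f.eval) f :=
  ⟨isProp_truthTableFormula _ _, propEval_truthTableFormula _ _⟩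

lemma subset_clos {Λ : Set MF} (hΛ : NormalLogic Λ) (hd hb : Bool) (O : Set BFun) :
    O ⊆ Clos Λ hd hb O := by
  intro f hf
  have hφ := definesBF_truthTableFormula f
  have hfrag : MLFrag (MOgen hd hb O) ((truthTableFormula f.arity f.eval).subst MF.var) :=
    .app _ (Or.inr (Or.inr ⟨f, hf, hφ⟩)) _ MLFrag.var
  rw [MF.subst_var] at hfrag
  exact ⟨_, _, hφ, hfrag, hΛ.taut _ (MF.isTautology_iff_self hφ.1)⟩

theorem stmt4_general (Λ : Set MF) (hΛ : NormalLogic Λ)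
    (hTC : TypeC Λ) (C : Set BFun) (hC : IsClone C) :
    (∀ hd hb : Bool, C ⊆ Clos Λ hd hb C) ∧
    Clos Λ false false C ⊆ C ∧
    Clos Λ true false C ⊆ cloneGen (C ∪ {bfBot}) ∧
    Clos Λ false true C ⊆ cloneGen (C ∪ {bfTop}) ∧
    Clos Λ true true C ⊆ cloneGen (C ∪ {bfTop, bfBot}) := by
  have hC_sub (O : Set BFun) : C ⊆ cloneGen (C ∪ O) :=
    Set.subset_union_left.trans (subset_cloneGen _)
  have hgen {O : Set BFun} {f : BFun} (hf : f ∈ O) : f ∈ cloneGen (C ∪ O) :=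
    subset_cloneGen _ (Set.mem_union_right _ hf)
  refine ⟨fun hd hb => subset_clos hΛ hd hb C, ?_, ?_, ?_, ?_⟩
  · exact clos_subset hTC.1 hC subset_rfl nofun nofun
  · exact clos_subset hTC.1 (isClone_cloneGen _) (hC_sub _) (fun _ => hgen rfl) nofun
  · exact clos_subset hTC.1 (isClone_cloneGen _) (hC_sub _) nofun (fun _ => hgen rfl)
  · exact clos_subset hTC.1 (isClone_cloneGen _) (hC_sub _) (fun _ => hgen (by simp))
      (fun _ => hgen (by simp))

theorem stmt4 (Λ : Set MF) (hΛ : NormalLogic Λ) (hcons : Λ ≠ Set.univ)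
    (hTC : TypeC Λ) (C : Set BFun) (hC : IsClone C) :
    (∀ hd hb : Bool, C ⊆ Clos Λ hd hb C) ∧
    Clos Λ false false C ⊆ C ∧
    Clos Λ true false C ⊆ cloneGen (C ∪ {bfBot}) ∧
    Clos Λ false true C ⊆ cloneGen (C ∪ {bfTop}) ∧
    Clos Λ true true C ⊆ cloneGen (C ∪ {bfTop, bfBot}) :=
  stmt4_general Λ hΛ hTC C hC
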